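/- Let a > 0 and Ω ∈ ℝ with Ω ≠ 0. Then lim_{σ→∞} ( a e^(−πΩ/a) / (4π²) ) ∫_{−∞}^∞ exp( −(r − iπ/2)²/(σ²a²) − 2iΩr/a ) / cosh²(r) dr = Ω / ( π ( e^(2πΩ/a) − 1 ) ). -/

import Mathlib

open MeasureTheory Filter Set
open scoped Topology Real

noncomputable section

private lemma aux_sub (ξ : ℝ) :
    Complex.betaIntegral (1 - (ξ/2 : ℝ) * Complex.I) (1 + (ξ/2 : ℝ) * Complex.I)
      = (∫ r : ℝ, Complex.exp (-Complex.I * ξ * r) / (Real.cosh r : ℂ) ^ 2) / 2 := by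
  set z : ℂ := (ξ/2 : ℝ) * Complex.I with hzdef
  set f : ℝ → ℝ := fun r => (1 + Real.exp (-2*r))⁻¹ with hf
  set f' : ℝ → ℝ := fun r => 2 * Real.exp (-2*r) / (1 + Real.exp (-2*r))^2 with hf'
  have hEpos : ∀ r : ℝ, (0:ℝ) < 1 + Real.exp (-2*r) := fun r => by positivity
  have hderiv : ∀ r : ℝ, HasDerivAt f (f' r) r := by
    intro r
    have h1 : HasDerivAt (fun r : ℝ => 1 + Real.exp (-2*r)) (-2 * Real.exp (-2*r)) r := by
      have h0 : HasDerivAt (fun x : ℝ => -2*x) (-2 : ℝ) r := by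
        simpa using (hasDerivAt_id r).const_mul (-2 : ℝ)
      have := (Real.hasDerivAt_exp (-2*r)).comp r h0
      simpa [mul_comm] using (this.const_add 1)
    have := h1.inv (hEpos r).ne'
    refine this.congr_deriv ?_
    show _ = 2 * Real.exp (-2*r) / (1 + Real.exp (-2*r))^2
    ring
  have hinj : Set.InjOn f Set.univ := by
    intro x _ y _ h
    have h2 : 1 + Real.exp (-2*x) = 1 + Real.exp (-2*y) := inv_inj.mp h
    have h3 : Real.exp (-2*x) = Real.exp (-2*y) := by linarith
    have := Real.exp_injective h3
    linarith
  have himg : f '' Set.univ = Set.Ioo (0:ℝ) 1 := by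
    ext y
    simp only [Set.image_univ, Set.mem_range, Set.mem_Ioo]
    constructor
    · rintro ⟨r, rfl⟩
      constructor
      · exact inv_pos.mpr (hEpos r)
      · rw [inv_lt_one_iff₀]
        right
        have := Real.exp_pos (-2*r); linarith
    · rintro ⟨hy0, hy1⟩
      refine ⟨-Real.log (y⁻¹ - 1)/2, ?_⟩
      have hy' : 0 < y⁻¹ - 1 := by
        have : 1 < y⁻¹ := (one_lt_inv₀ hy0).mpr hy1
        linarith
      have : Real.exp (-2 * (-Real.log (y⁻¹ - 1)/2)) = y⁻¹ - 1 := by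
        rw [show -2 * (-Real.log (y⁻¹ - 1)/2) = Real.log (y⁻¹ - 1) by ring]
        exact Real.exp_log hy'
      simp only [hf, this]
      field_simp
      ring
  have key := integral_image_eq_integral_abs_deriv_smul MeasurableSet.univ
      (fun x _ => (hderiv x).hasDerivWithinAt) hinj
      (fun x : ℝ => (x:ℂ) ^ (-z) * ((1:ℂ) - (x:ℂ)) ^ z)
  rw [himg] at key
  have hbeta : Complex.betaIntegral (1 - z) (1 + z)
      = ∫ x in Set.Ioo (0:ℝ) 1, (x:ℂ) ^ (-z) * ((1:ℂ) - (x:ℂ)) ^ z := by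
    rw [Complex.betaIntegral, intervalIntegral.integral_of_le zero_le_one,
      ← integral_Ioc_eq_integral_Ioo]
    congr 1
    ext x
    congr 2 <;> ring
  rw [hbeta, key, setIntegral_univ]
  have hptwise : ∀ r : ℝ,
      |f' r| • ((f r : ℂ) ^ (-z) * ((1:ℂ) - (f r : ℂ)) ^ z)
        = Complex.exp (-Complex.I * ξ * r) / (Real.cosh r : ℂ) ^ 2 / 2 := by
    intro r
    set E := Real.exp (-2*r) with hE
    have hEp : (0:ℝ) < E := Real.exp_pos _
    have h1E : (0:ℝ) < 1 + E := hEpos r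
    have hfr : f r = (1 + E)⁻¹ := rfl
    have hfrpos : 0 < f r := inv_pos.mpr h1E
    have h1fr : 1 - f r = E / (1 + E) := by rw [hfr]; field_simp; ring
    have h1frpos : 0 < 1 - f r := by rw [h1fr]; positivity
    -- cpow computation
    have hcpow : (f r : ℂ) ^ (-z) * ((1:ℂ) - (f r : ℂ)) ^ z
        = Complex.exp (-Complex.I * ξ * r) := by
      have hne1 : (f r : ℂ) ≠ 0 := by exact_mod_cast hfrpos.ne'
      have hne2 : ((1:ℂ) - (f r : ℂ)) ≠ 0 := by
        rw [show ((1:ℂ) - (f r : ℂ)) = ((1 - f r : ℝ) : ℂ) by push_cast; ring]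
        exact_mod_cast h1frpos.ne'
      rw [Complex.cpow_def_of_ne_zero hne1, Complex.cpow_def_of_ne_zero hne2,
        ← Complex.exp_add]
      congr 1
      rw [show ((1:ℂ) - (f r : ℂ)) = ((1 - f r : ℝ) : ℂ) by push_cast; ring]
      rw [← Complex.ofReal_log hfrpos.le, ← Complex.ofReal_log h1frpos.le]
      have hlog1 : Real.log (f r) = -Real.log (1 + E) := by rw [hfr, Real.log_inv]
      have hlog2 : Real.log (1 - f r) = -2*r - Real.log (1 + E) := by
        rw [h1fr, Real.log_div hEp.ne' h1E.ne', hE, Real.log_exp]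
      rw [hlog1, hlog2, hzdef]
      push_cast
      ring
    have habs : |f' r| = 1 / (2 * Real.cosh r ^ 2) := by
      have hfp : 0 ≤ f' r := by
        simp only [hf']
        positivity
      rw [abs_of_nonneg hfp]
      show 2 * Real.exp (-2*r) / (1 + Real.exp (-2*r))^2 = _
      rw [Real.cosh_eq]
      have hpq : Real.exp r * Real.exp (-r) = 1 := by
        rw [← Real.exp_add]; simp
      have hEeq : Real.exp (-2*r) = Real.exp (-r) ^ 2 := by
        rw [sq, ← Real.exp_add]; ring_nf
      rw [hEeq]
      field_simp
      nlinarith [Real.exp_pos r, Real.exp_pos (-r)]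
    rw [hcpow, habs]
    rw [Complex.real_smul]
    push_cast
    have : ((Real.cosh r : ℂ)) ^ 2 ≠ 0 :=
      pow_ne_zero _ (by exact_mod_cast (Real.cosh_pos r).ne')
    field_simp
  rw [show (fun r : ℝ => |f' r| • ((f r : ℂ) ^ (-z) * ((1:ℂ) - (f r : ℂ)) ^ z))
      = fun r : ℝ => Complex.exp (-Complex.I * ξ * r) / (Real.cosh r : ℂ) ^ 2 / 2
    from funext hptwise]
  rw [integral_div]

private lemma fourier_sech_sq (ξ : ℝ) (hξ : ξ ≠ 0) :
    ∫ r : ℝ, Complex.exp (-Complex.I * ξ * r) / (Real.cosh r : ℂ) ^ 2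
      = ((Real.pi * ξ / Real.sinh (Real.pi * ξ / 2) : ℝ) : ℂ) := by
  set z : ℂ := ((ξ/2 : ℝ) : ℂ) * Complex.I with hzdef
  have hz : z ≠ 0 := by
    apply mul_ne_zero _ Complex.I_ne_zero
    exact_mod_cast div_ne_zero hξ two_ne_zero
  have hre1 : 0 < (1 - z).re := by simp [hzdef]
  have hre2 : 0 < (1 + z).re := by simp [hzdef]
  have hβ := Complex.Gamma_mul_Gamma_eq_betaIntegral hre1 hre2
  rw [show (1 - z) + (1 + z) = 2 by ring] at hβ
  have hΓ2 : Complex.Gamma 2 = 1 := by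
    rw [show (2:ℂ) = 1 + 1 by norm_num, Complex.Gamma_add_one _ one_ne_zero,
      Complex.Gamma_one, mul_one]
  rw [hΓ2, one_mul] at hβ
  have hG : Complex.Gamma (1 - z) * Complex.Gamma (1 + z)
      = z * (Real.pi / Complex.sin (Real.pi * z)) := by
    rw [show (1:ℂ) + z = z + 1 by ring, Complex.Gamma_add_one z hz,
      ← Complex.Gamma_mul_Gamma_one_sub z]
    ring
  have hs : Real.sinh (Real.pi * ξ / 2) ≠ 0 :=
    Real.sinh_ne_zero.mpr (div_ne_zero (mul_ne_zero Real.pi_ne_zero hξ) two_ne_zero)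
  have hsin : Complex.sin ((Real.pi : ℂ) * z)
      = ((Real.sinh (Real.pi * ξ / 2) : ℝ) : ℂ) * Complex.I := by
    rw [show (Real.pi : ℂ) * z = ((Real.pi * ξ / 2 : ℝ) : ℂ) * Complex.I by
      rw [hzdef]; push_cast; ring]
    rw [Complex.sin_mul_I, Complex.ofReal_sinh]
  have hmain := aux_sub ξ
  rw [← hβ] at hmain
  rw [hG, hsin] at hmain
  have : (∫ r : ℝ, Complex.exp (-Complex.I * ξ * r) / (Real.cosh r : ℂ) ^ 2)
      = 2 * (z * ((Real.pi : ℂ) / (((Real.sinh (Real.pi * ξ / 2) : ℝ) : ℂ) * Complex.I))) := by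
    rw [hmain]; ring
  rw [this, hzdef]
  have hs' : ((Real.sinh (Real.pi * ξ / 2) : ℝ) : ℂ) ≠ 0 := by exact_mod_cast hs
  push_cast
  have hcs : Complex.sinh ((Real.pi : ℂ) * ξ / 2) ≠ 0 := by
    rw [show ((Real.pi : ℂ) * ξ / 2) = ((Real.pi * ξ / 2 : ℝ) : ℂ) by push_cast; ring,
      ← Complex.ofReal_sinh]
    exact_mod_cast hs
  field_simp

private lemma real_id (a Ω : ℝ) (ha : 0 < a) (hΩ : Ω ≠ 0) :
    a * Real.exp (-Real.pi*Ω/a)/(4*Real.pi^2)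
        * (Real.pi * (2*Ω/a) / Real.sinh (Real.pi * (2*Ω/a)/2))
      = Ω/(Real.pi*(Real.exp (2*Real.pi*Ω/a)-1)) := by
  rw [show Real.pi*(2*Ω/a)/2 = Real.pi*Ω/a by ring]
  have hs : Real.sinh (Real.pi*Ω/a) ≠ 0 :=
    Real.sinh_ne_zero.mpr (div_ne_zero (mul_ne_zero Real.pi_ne_zero hΩ) ha.ne')
  have hkey : Real.exp (2*Real.pi*Ω/a) - 1
      = 2*Real.exp (Real.pi*Ω/a)*Real.sinh (Real.pi*Ω/a) := by
    rw [Real.sinh_eq, show 2*Real.pi*Ω/a = Real.pi*Ω/a + Real.pi*Ω/a by ring, Real.exp_add,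
      Real.exp_neg]
    field_simp
  rw [hkey, show -Real.pi*Ω/a = -(Real.pi*Ω/a) by ring, Real.exp_neg]
  have he := Real.exp_ne_zero (Real.pi*Ω/a)
  have hπ := Real.pi_ne_zero
  field_simp
  ring

/-- Long-detection limit of the Gaussian-switched response of a uniformly accelerated detector
(proper acceleration `a`) coupled to the scalar density of the massless Dirac field in
two-dimensional Minkowski vacuum: as `σ → ∞` the response tends to the Planckian distribution
`Ω/(π(e^{2πΩ/a} − 1))` at the Unruh temperature `a/(2π)`. -/
theorem accelerated_response_long_detection_planckian (a Ω : ℝ) (ha : 0 < a) (hΩ : Ω ≠ 0) :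
    Tendsto (fun σ : ℝ =>
        ((a * Real.exp (-Real.pi * Ω / a) / (4 * Real.pi ^ 2) : ℝ) : ℂ) *
          ∫ r : ℝ, Complex.exp (-((r : ℂ) - Complex.I * Real.pi / 2) ^ 2 /
              ((σ : ℂ) ^ 2 * (a : ℂ) ^ 2) - 2 * Complex.I * Ω * r / a) /
            ((Real.cosh r : ℂ)) ^ 2)
      atTop
      (𝓝 (((Ω / (Real.pi * (Real.exp (2 * Real.pi * Ω / a) - 1)) : ℝ) : ℂ))) := by
  have ha' : (a : ℝ) ≠ 0 := ha.ne'
  set ξ : ℝ := 2 * Ω / a with hξdef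
  have hξ : ξ ≠ 0 := div_ne_zero (mul_ne_zero two_ne_zero hΩ) ha'
  set C : ℝ := Real.exp (Real.pi ^ 2 / (4 * a ^ 2)) with hC
  -- dominated convergence
  have hcosh_ne : ∀ r : ℝ, ((Real.cosh r : ℂ)) ^ 2 ≠ 0 := fun r =>
    pow_ne_zero _ (by exact_mod_cast (Real.cosh_pos r).ne')
  have hDCT : Tendsto (fun σ : ℝ =>
      ∫ r : ℝ, Complex.exp (-((r : ℂ) - Complex.I * Real.pi / 2) ^ 2 /
          ((σ : ℂ) ^ 2 * (a : ℂ) ^ 2) - 2 * Complex.I * Ω * r / a) /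
        ((Real.cosh r : ℂ)) ^ 2) atTop
      (𝓝 (∫ r : ℝ, Complex.exp (-Complex.I * ξ * r) / (Real.cosh r : ℂ) ^ 2)) := by
    apply tendsto_integral_filter_of_dominated_convergence
        (fun r : ℝ => C * (1 + r ^ 2)⁻¹)
    · filter_upwards with σ
      apply Continuous.aestronglyMeasurable
      apply Continuous.div _ _ fun r => hcosh_ne r
      · exact Complex.continuous_exp.comp (by fun_prop)
      · fun_prop
    · filter_upwards [eventually_ge_atTop (1:ℝ)] with σ hσ
      apply ae_of_all
      intro r
      have hσ0 : (0:ℝ) < σ := lt_of_lt_of_le one_pos hσ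
      have hw : -((r : ℂ) - Complex.I * Real.pi / 2) ^ 2 / ((σ : ℂ) ^ 2 * (a : ℂ) ^ 2)
          - 2 * Complex.I * Ω * r / a
          = (((Real.pi^2/4 - r^2)/(σ^2*a^2) : ℝ) : ℂ)
            + ((Real.pi*r/(σ^2*a^2) - 2*Ω*r/a : ℝ) : ℂ) * Complex.I := by
        have hσc : (σ : ℂ) ≠ 0 := by exact_mod_cast hσ0.ne'
        have hac : (a : ℂ) ≠ 0 := by exact_mod_cast ha'
        push_cast
        field_simp [hσc, hac]
        ring_nf
        simp only [Complex.I_sq]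
        ring
      rw [norm_div, hw]
      have hre : ((((Real.pi^2/4 - r^2)/(σ^2*a^2) : ℝ) : ℂ)
            + ((Real.pi*r/(σ^2*a^2) - 2*Ω*r/a : ℝ) : ℂ) * Complex.I).re
          = (Real.pi^2/4 - r^2)/(σ^2*a^2) := by
        rw [Complex.add_re, Complex.mul_I_re, Complex.ofReal_re, Complex.ofReal_im]
        ring
      rw [Complex.norm_exp, hre]
      have hnc : ‖((Real.cosh r : ℂ)) ^ 2‖ = Real.cosh r ^ 2 := by
        rw [norm_pow, Complex.norm_real, Real.norm_eq_abs,
          abs_of_pos (Real.cosh_pos r)]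
      rw [hnc]
      have hσ2 : (1:ℝ) ≤ σ^2 := by nlinarith
      have h1 : (Real.pi^2/4 - r^2)/(σ^2*a^2) ≤ Real.pi^2/(4*a^2) := by
        rw [div_le_div_iff₀ (by positivity) (by positivity)]
        have hfac : (0:ℝ) ≤ (σ^2 - 1) * Real.pi^2 * a^2 :=
          mul_nonneg (mul_nonneg (by nlinarith) (sq_nonneg _)) (sq_nonneg _)
        nlinarith [sq_nonneg r, sq_nonneg a]
      have h2 : 1 + r^2 ≤ Real.cosh r ^ 2 := by
        rw [Real.cosh_sq']
        have h3 : |r| ≤ |Real.sinh r| := by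
          rw [Real.abs_sinh]
          exact Real.self_le_sinh_iff.mpr (abs_nonneg r)
        nlinarith [abs_nonneg r, sq_abs r, sq_abs (Real.sinh r)]
      calc Real.exp ((Real.pi^2/4 - r^2)/(σ^2*a^2)) / Real.cosh r ^ 2
            ≤ C / (1 + r^2) := by
              apply div_le_div₀ (by positivity) (Real.exp_le_exp.mpr h1) (by positivity) h2
        _ = C * (1 + r^2)⁻¹ := by ring
    · exact integrable_inv_one_add_sq.const_mul C
    · apply ae_of_all
      intro r
      have h1 : Tendsto (fun σ : ℝ => ((σ : ℂ) ^ 2 * (a : ℂ) ^ 2)⁻¹) atTop (𝓝 0) := by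
        have h2 : Tendsto (fun σ : ℝ => (σ ^ 2 * a ^ 2 : ℝ)) atTop atTop :=
          Tendsto.atTop_mul_const (by positivity) (tendsto_pow_atTop two_ne_zero)
        have h3 : Tendsto (fun σ : ℝ => ((σ ^ 2 * a ^ 2 : ℝ))⁻¹) atTop (𝓝 0) :=
          tendsto_inv_atTop_zero.comp h2
        have h4 : Tendsto (fun σ : ℝ => Complex.ofReal ((σ ^ 2 * a ^ 2)⁻¹)) atTop
            (𝓝 (Complex.ofReal 0)) := (Complex.continuous_ofReal.tendsto 0).comp h3
        have h5 : (fun σ : ℝ => ((σ : ℂ) ^ 2 * (a : ℂ) ^ 2)⁻¹)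
            = fun σ : ℝ => Complex.ofReal ((σ ^ 2 * a ^ 2)⁻¹) := by
          funext σ; push_cast; ring
        rw [h5, show Complex.ofReal 0 = 0 by norm_num] at *
        exact h4
      have h5 : Tendsto (fun σ : ℝ =>
          -((r : ℂ) - Complex.I * Real.pi / 2) ^ 2 / ((σ : ℂ) ^ 2 * (a : ℂ) ^ 2)
            - 2 * Complex.I * Ω * r / a) atTop (𝓝 (-(2 * Complex.I * Ω * r / a))) := by
        simp only [div_eq_mul_inv]
        simpa [div_eq_mul_inv] using ((h1.const_mul (-((r : ℂ) - Complex.I * Real.pi / 2) ^ 2)).sub_const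
          (2 * Complex.I * (Ω : ℂ) * (r : ℂ) * (a : ℂ)⁻¹))
      have h7 := ((Complex.continuous_exp.tendsto _).comp h5).div_const
        (((Real.cosh r : ℂ)) ^ 2)
      simp only [Function.comp_def] at h7
      convert h7 using 3
      rw [hξdef]
      push_cast
      ring
  have hval := fourier_sech_sq ξ hξ
  rw [hval] at hDCT
  have hfinal := hDCT.const_mul
    (((a * Real.exp (-Real.pi * Ω / a) / (4 * Real.pi ^ 2) : ℝ) : ℂ))
  rw [← Complex.ofReal_mul] at hfinal
  rw [hξdef] at hfinal
  rw [real_id a Ω ha hΩ] at hfinal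
  exact hfinal

end
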